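/- Suppose f : V → W and f̃ : Ṽ → W are quasi-isomorphisms. If z = v + s w + ṽ is a cocycle in Cyl(f, f̃) such that v is exact in V, then z is a coboundary in Cyl(f, f̃), i.e. z = ∂^Cyl(y) for some y ∈ Cyl(f, f̃). In other words, π_V is injective on cohomology. -/

import Mathlib

/-- An (unbounded) cochain complex of `K`-vector spaces.  The differential is
indexed by pairs of consecutive degrees (`i`, `j` with `i + 1 = j`) to avoid
dependent-type rewriting along equalities of degrees. -/
structure Cochain (K : Type) [Field K] where
  X : ℤ → Type
  [ab : ∀ n : ℤ, AddCommGroup (X n)]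
  [mod : ∀ n : ℤ, Module K (X n)]
  d : ∀ (i j : ℤ), i + 1 = j → (X i →ₗ[K] X j)
  dd : ∀ (i j k : ℤ) (hij : i + 1 = j) (hjk : j + 1 = k) (x : X i),
      d j k hjk (d i j hij x) = 0

attribute [instance] Cochain.ab Cochain.mod

/-- A chain map of cochain complexes of `K`-vector spaces. -/
structure ChainMap (K : Type) [Field K] (V W : Cochain K) where
  f : ∀ n : ℤ, V.X n →ₗ[K] W.X n
  comm : ∀ (i j : ℤ) (h : i + 1 = j) (x : V.X i),
      f j (V.d i j h x) = W.d i j h (f i x)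

/-- `φ` is a quasi-isomorphism: it induces an isomorphism on cohomology in every
degree, i.e. the induced map on cohomology classes is surjective (every cocycle
of the target is, up to a coboundary, the image of a cocycle) and injective
(a cocycle mapping to a coboundary is a coboundary). -/
def IsQuasiIso {K : Type} [Field K] {V W : Cochain K} (φ : ChainMap K V W) : Prop :=
  (∀ (n : ℤ) (y : W.X n), W.d n (n + 1) rfl y = 0 →
      ∃ (x : V.X n) (z : W.X (n - 1)),
        V.d n (n + 1) rfl x = 0 ∧
        φ.f n x = y + W.d (n - 1) n (by omega) z) ∧
  (∀ (n : ℤ) (x : V.X n), V.d n (n + 1) rfl x = 0 →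
      (∃ z : W.X (n - 1), φ.f n x = W.d (n - 1) n (by omega) z) →
      ∃ u : V.X (n - 1), x = V.d (n - 1) n (by omega) u)

/-- Transport along an equality of degrees. -/
def Cochain.cast {K : Type} [Field K] (V : Cochain K) {i j : ℤ} (h : i = j) :
    V.X i →ₗ[K] V.X j := by subst h; exact LinearMap.id

/-- The degree `n` component of the cylinder `Cyl(f, f̃) = V ⊕ sW ⊕ Ṽ`,
namely `V^n × W^(n-1) × Ṽ^n`  (recall `(sW)^n = W^(n-1)`). -/
abbrev CylX {K : Type} [Field K] (V W Vt : Cochain K) (n : ℤ) : Type :=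
  V.X n × W.X (n - 1) × Vt.X n

/-- The cylinder differential `∂^Cyl (v + s w + ṽ) = ∂v + s (f v - ∂w + f̃ ṽ) + ∂ṽ`. -/
def cylD {K : Type} [Field K] {V W Vt : Cochain K}
    (f : ChainMap K V W) (ft : ChainMap K Vt W)
    (i j : ℤ) (h : i + 1 = j) : CylX V W Vt i → CylX V W Vt j :=
  fun p =>
    (V.d i j h p.1,
     W.cast (show i = j - 1 by omega) (f.f i p.1)
       - W.d (i - 1) (j - 1) (by omega) p.2.1
       + W.cast (show i = j - 1 by omega) (ft.f i p.2.2),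
     Vt.d i j h p.2.2)

/-!
Write `z = (v, w, ṽ)` with `v = ∂v₁`. The cocycle condition `f v - ∂w + f̃ ṽ = 0` makes `f̃ ṽ`
exact, so `ṽ = ∂u` by injectivity of `H(f̃)`. Then `z - ∂^Cyl (v₁, 0, u) = (0, s ω, 0)` with
`ω = w - f v₁ - f̃ u` a cocycle of `W`, and by surjectivity of `H(f)` every such `(0, s ω, 0)`
is a coboundary of the cylinder.
-/

namespace Cochain

variable {K : Type} [Field K] (V : Cochain K)

lemma cast_d {i j j' : ℤ} (h : i + 1 = j) (h' : i + 1 = j') (e : j = j') (x : V.X i) :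
    V.cast e (V.d i j h x) = V.d i j' h' x := by
  subst e; rfl

lemma cast_eq_zero_iff {i j : ℤ} (e : i = j) {x : V.X i} : V.cast e x = 0 ↔ x = 0 := by
  subst e; rfl

lemma d_eq_zero_congr {i j j' : ℤ} (h : i + 1 = j) (h' : i + 1 = j') {x : V.X i} :
    V.d i j h x = 0 ↔ V.d i j' h' x = 0 := by
  subst h h'; rfl

end Cochain

namespace ChainMap

variable {K : Type} [Field K] {V W : Cochain K} (φ : ChainMap K V W)

def SurjOnCohomology : Prop :=
  ∀ (n : ℤ) (y : W.X n), W.d n (n + 1) rfl y = 0 →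
    ∃ (x : V.X n) (z : W.X (n - 1)),
      V.d n (n + 1) rfl x = 0 ∧ φ.f n x = y + W.d (n - 1) n (by omega) z

def InjOnCohomology : Prop :=
  ∀ (n : ℤ) (x : V.X n), V.d n (n + 1) rfl x = 0 →
    (∃ z : W.X (n - 1), φ.f n x = W.d (n - 1) n (by omega) z) →
    ∃ u : V.X (n - 1), x = V.d (n - 1) n (by omega) u

end ChainMap

lemma IsQuasiIso.surjOnCohomology {K : Type} [Field K] {V W : Cochain K} {φ : ChainMap K V W}
    (hφ : IsQuasiIso φ) : φ.SurjOnCohomology :=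
  hφ.1

lemma IsQuasiIso.injOnCohomology {K : Type} [Field K] {V W : Cochain K} {φ : ChainMap K V W}
    (hφ : IsQuasiIso φ) : φ.InjOnCohomology :=
  hφ.2

section Cylinder

variable {K : Type} [Field K] {V W Vt : Cochain K} (f : ChainMap K V W) (ft : ChainMap K Vt W)

lemma cylD_add {i j : ℤ} (h : i + 1 = j) (p q : CylX V W Vt i) :
    cylD f ft i j h (p + q) = cylD f ft i j h p + cylD f ft i j h q := by
  ext <;> simp only [cylD, Prod.fst_add, Prod.snd_add, map_add]
  abel

lemma cylD_pred {n : ℤ} (h : n - 1 + 1 = n) (y : CylX V W Vt (n - 1)) :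
    cylD f ft (n - 1) n h y =
      (V.d (n - 1) n h y.1,
       f.f (n - 1) y.1 - W.d (n - 1 - 1) (n - 1) (by omega) y.2.1 + ft.f (n - 1) y.2.2,
       Vt.d (n - 1) n h y.2.2) :=
  rfl

lemma cylD_succ_eq_zero_iff (n : ℤ) (z : CylX V W Vt n) :
    cylD f ft n (n + 1) rfl z = 0 ↔
      V.d n (n + 1) rfl z.1 = 0 ∧
      f.f n z.1 - W.d (n - 1) n (by omega) z.2.1 + ft.f n z.2.2 = 0 ∧
      Vt.d n (n + 1) rfl z.2.2 = 0 := by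
  have e : n = n + 1 - 1 := by omega
  have hmid : W.cast e (f.f n z.1) - W.d (n - 1) (n + 1 - 1) (by omega) z.2.1
      + W.cast e (ft.f n z.2.2)
      = W.cast e (f.f n z.1 - W.d (n - 1) n (by omega) z.2.1 + ft.f n z.2.2) := by
    rw [map_add, map_sub, W.cast_d]
  simp only [cylD, Prod.mk_eq_zero, hmid, W.cast_eq_zero_iff]

variable {f ft}

lemma exists_eq_d_of_cylD_eq_zero (hft : ft.InjOnCohomology) {n : ℤ} {z : CylX V W Vt n}
    (hz : cylD f ft n (n + 1) rfl z = 0) {v₁ : V.X (n - 1)}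
    (hv₁ : z.1 = V.d (n - 1) n (by omega) v₁) :
    ∃ u : Vt.X (n - 1), z.2.2 = Vt.d (n - 1) n (by omega) u := by
  obtain ⟨-, hmid, hdvt⟩ := (cylD_succ_eq_zero_iff f ft n z).1 hz
  refine hft n z.2.2 hdvt ⟨z.2.1 - f.f (n - 1) v₁, ?_⟩
  rw [map_sub, ← f.comm, ← hv₁]
  linear_combination (norm := abel) hmid

lemma exists_cylD_eq_of_d_eq_zero (hf : f.SurjOnCohomology) {n : ℤ} {ω : W.X (n - 1)}
    (hω : W.d (n - 1) n (by omega) ω = 0) :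
    ∃ y : CylX V W Vt (n - 1), cylD f ft (n - 1) n (by omega) y = (0, ω, 0) := by
  obtain ⟨x, b, hx, hfx⟩ := hf (n - 1) ω ((W.d_eq_zero_congr _ _).1 hω)
  refine ⟨(x, b, 0), ?_⟩
  rw [cylD_pred, (V.d_eq_zero_congr _ _).1 hx, hfx]
  simp

end Cylinder

/-- If `f` and `f̃` are quasi-isomorphisms and `z = v + s w + ṽ` is a cocycle in
`Cyl(f, f̃)` whose component `v` is exact in `V`, then `z` is a coboundary in
`Cyl(f, f̃)`; in other words `π_V` is injective on cohomology. -/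
theorem cylinder_projection_V_injective_on_cohomology {K : Type} [Field K]
    {V W Vt : Cochain K} (f : ChainMap K V W) (ft : ChainMap K Vt W)
    (hf : IsQuasiIso f) (hft : IsQuasiIso ft)
    (n : ℤ) (z : CylX V W Vt n)
    (hz : cylD f ft n (n + 1) rfl z = 0)
    (hv : ∃ v₁ : V.X (n - 1), z.1 = V.d (n - 1) n (by omega) v₁) :
    ∃ y : CylX V W Vt (n - 1), z = cylD f ft (n - 1) n (by omega) y := by
  obtain ⟨v₁, hv₁⟩ := hv
  obtain ⟨u, hu⟩ := exists_eq_d_of_cylD_eq_zero hft.injOnCohomology hz hv₁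
  obtain ⟨-, hmid, -⟩ := (cylD_succ_eq_zero_iff f ft n z).1 hz
  have hω : W.d (n - 1) n (by omega) (z.2.1 - f.f (n - 1) v₁ - ft.f (n - 1) u) = 0 := by
    rw [map_sub, map_sub, ← f.comm, ← ft.comm, ← hv₁, ← hu]
    linear_combination (norm := abel) -hmid
  obtain ⟨y, hy⟩ := exists_cylD_eq_of_d_eq_zero (ft := ft) hf.surjOnCohomology hω
  refine ⟨(v₁, 0, u) + y, ?_⟩
  rw [cylD_add, hy, cylD_pred, ← hv₁, ← hu, map_zero]
  ext <;> simp only [Prod.fst_add, Prod.snd_add, add_zero, sub_zero]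
  abel
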